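/- A full triangulated subcategory D' of a triangulated category D is admissible if and only if for every object A of D there exists a distinguished triangle B → A → C → B[1] with B in D' and C in D'^⊥. -/

import Mathlib

open CategoryTheory Limits Pretriangulated

set_option linter.unusedSectionVars false

universe v u

variable {C : Type u} [Category.{v} C] [HasZeroObject C] [HasShift C ℤ]
  [Preadditive C] [∀ (n : ℤ), (shiftFunctor C n).Additive] [Pretriangulated C]
  [IsTriangulated C]

namespace Triangulated

variable (C)

/-- A triangulated subcategory (the structure `Triangulated.Subcategory` of the older
Mathlib, restated verbatim since it has been removed). -/
structure Subcategory where
  P : C → Prop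
  zero' : ∃ (Z : C) (_ : IsZero Z), P Z
  shift (X : C) (n : ℤ) : P X → P (X⟦n⟧)
  ext₂' (T : Triangle C) (_ : T ∈ distTriang C) : P T.obj₁ → P T.obj₃ →
    ObjectProperty.isoClosure P T.obj₂

end Triangulated

/-- The right orthogonal complement of a subcategory: objects `A` such that
`Hom(B, A) = 0` for every `B` in the subcategory. -/
def rightOrthogonal (P : C → Prop) (A : C) : Prop :=
  ∀ (B : C), P B → ∀ (f : B ⟶ A), f = 0

/-- The right orthogonal is stable under shifts. -/
lemma rightOrthogonal_shift (S : Triangulated.Subcategory C) {Co : C}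
    (hCo : rightOrthogonal S.P Co) (n : ℤ) : rightOrthogonal S.P (Co⟦n⟧) := by
  intro X hX k
  have h0 : (shiftFunctor C (-n)).map k ≫ (shiftShiftNeg Co n).hom = 0 :=
    hCo _ (S.shift X (-n) hX) _
  have h1 : (shiftFunctor C (-n)).map k = 0 := by
    rw [← cancel_mono (shiftShiftNeg Co n).hom, h0, zero_comp]
  exact (shiftFunctor C (-n)).map_injective (by rw [h1, Functor.map_zero])

/-- A full triangulated subcategory `D'` of a triangulated category `D` is admissible
(the inclusion admits a right adjoint) if and only if every object `A` of `D` fits in a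
distinguished triangle `B ⟶ A ⟶ C ⟶ B⟦1⟧` with `B ∈ D'` and `C ∈ D'^⊥`. -/
theorem admissible_iff_distinguished_triangles (S : Triangulated.Subcategory C) :
    (ObjectProperty.ι S.P).IsLeftAdjoint ↔
      ∀ (A : C), ∃ (B Co : C) (_ : S.P B) (_ : rightOrthogonal S.P Co)
        (f : B ⟶ A) (g : A ⟶ Co) (h : Co ⟶ B⟦(1 : ℤ)⟧),
        Triangle.mk f g h ∈ distTriang C := by
  constructor
  · rintro ⟨R, ⟨adj⟩⟩ A
    set ι := ObjectProperty.ι S.P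
    set f : ι.obj (R.obj A) ⟶ A := adj.counit.app A with hf
    obtain ⟨Co, g, h, mem⟩ := distinguished_cocone_triangle f
    -- injectivity of composition with the counit
    have hinj : ∀ (X : C) (hX : S.P X) (m : X ⟶ ι.obj (R.obj A)),
        m ≫ f = 0 → m = 0 := by
      intro X hX m hm
      have := (adj.homEquiv ⟨X, hX⟩ A).symm.injective
        (a₁ := ObjectProperty.homMk m) (a₂ := ObjectProperty.homMk (0 : X ⟶ ι.obj (R.obj A)))
      refine congrArg InducedCategory.Hom.hom (this ?_)
      rw [Adjunction.homEquiv_counit, Adjunction.homEquiv_counit]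
      show m ≫ f = (0 : X ⟶ ι.obj (R.obj A)) ≫ f
      rw [hm, zero_comp]
    -- surjectivity of composition with the counit
    have hsurj : ∀ (X : C) (hX : S.P X) (u : X ⟶ A),
        ∃ m : X ⟶ ι.obj (R.obj A), m ≫ f = u := by
      intro X hX u
      refine ⟨((adj.homEquiv ⟨X, hX⟩ A) u).hom, ?_⟩
      have := (adj.homEquiv ⟨X, hX⟩ A).symm_apply_apply u
      rw [Adjunction.homEquiv_counit] at this
      exact this
    refine ⟨_, Co, (R.obj A).property, ?_, f, g, h, mem⟩
    intro X hX u
    -- first show `u ≫ h = 0`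
    have hzero : u ≫ h = 0 := by
      set e := shiftFunctorCompIsoId C (1 : ℤ) (-1 : ℤ) (add_neg_cancel 1) with he
      have h31 : (u ≫ h) ≫ (shiftFunctor C (1 : ℤ)).map f = 0 := by
        have := comp_distTriang_mor_zero₃₁ _ mem
        change h ≫ (shiftFunctor C (1 : ℤ)).map f = 0 at this
        rw [Category.assoc, this, comp_zero]
      have hnat : e.hom.app (ι.obj (R.obj A)) ≫ f
          = (shiftFunctor C (-1 : ℤ)).map ((shiftFunctor C (1 : ℤ)).map f)
            ≫ e.hom.app A := by
        simpa using (e.hom.naturality f).symm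
      have hk1 : ((shiftFunctor C (-1 : ℤ)).map (u ≫ h) ≫ e.hom.app (ι.obj (R.obj A))) ≫ f
          = 0 := by
        rw [Category.assoc, hnat, ← Category.assoc, ← Functor.map_comp, h31,
          Functor.map_zero, zero_comp]
      have hk2 : (shiftFunctor C (-1 : ℤ)).map (u ≫ h) ≫ e.hom.app (ι.obj (R.obj A)) = 0 :=
        hinj _ (S.shift X (-1) hX) _ hk1
      have hk3 : (shiftFunctor C (-1 : ℤ)).map (u ≫ h) = 0 := by
        rw [← cancel_mono (e.hom.app (ι.obj (R.obj A))), hk2, zero_comp]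
      apply (shiftFunctor C (-1 : ℤ)).map_injective
      rw [hk3, Functor.map_zero]
    obtain ⟨v, hv⟩ := Triangle.coyoneda_exact₃ _ mem u hzero
    change X ⟶ A at v
    obtain ⟨m, hm⟩ := hsurj X hX v
    change u = v ≫ g at hv
    have h12 : f ≫ g = 0 := comp_distTriang_mor_zero₁₂ _ mem
    rw [hv, ← hm, Category.assoc, h12, comp_zero]
  · intro hyp
    choose B Co hB hCo f g h mem using hyp
    set ι := ObjectProperty.ι S.P
    -- composition with `f A` is bijective on Homs from the subcategory
    have bij : ∀ (X : ObjectProperty.FullSubcategory S.P) (A : C),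
        Function.Bijective (fun (m : X ⟶ (⟨B A, hB A⟩ : ObjectProperty.FullSubcategory S.P)) =>
          ((m.hom ≫ f A : X.obj ⟶ A))) := by
      intro X A
      constructor
      · intro m₁ m₂ hm
        dsimp only at hm
        have key : ∀ (v : X.obj ⟶ B A), v ≫ f A = 0 → v = 0 := by
          intro v hv
          obtain ⟨w, hw⟩ := Triangle.coyoneda_exact₂ _
            (inv_rot_of_distTriang _ (mem A)) v hv
          have hw0 : w = 0 := rightOrthogonal_shift S (hCo A) (-1) X.obj X.property w
          rw [hw, hw0, zero_comp]
          rfl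
        have := key (m₁.hom - m₂.hom) (by rw [Preadditive.sub_comp, hm, sub_self])
        exact InducedCategory.hom_ext (sub_eq_zero.mp this)
      · intro u
        have hu : u ≫ g A = 0 := hCo A X.obj X.property (u ≫ g A)
        obtain ⟨m, hm⟩ := Triangle.coyoneda_exact₂ _ (mem A) u hu
        change u = m ≫ f A at hm
        exact ⟨ObjectProperty.homMk m, hm.symm⟩
    refine ⟨_, ⟨Adjunction.adjunctionOfEquivRight
      (G_obj := fun A => (⟨B A, hB A⟩ : ObjectProperty.FullSubcategory S.P))
      (fun X A => (Equiv.ofBijective _ (bij X A)).symm) ?_⟩⟩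
    intro X' X A f' g'
    have h2 := Equiv.ofBijective_apply_symm_apply _ (bij X A) g'
    dsimp only at h2
    have key : ι.map f' ≫ g'
        = (fun (m : X' ⟶ (⟨B A, hB A⟩ : ObjectProperty.FullSubcategory S.P)) => ((m.hom ≫ f A : X'.obj ⟶ A)))
          (f' ≫ (Equiv.ofBijective _ (bij X A)).symm g') := by
      dsimp only
      conv_lhs => rw [← h2]
      rw [← Category.assoc]
      rfl
    rw [key, Equiv.ofBijective_symm_apply_apply]
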